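/- Assume g(A N, ξ) = 0, set β := g(A ξ, ξ), let α ∈ ℝ, and let S : T → T be a g-symmetric real-linear map with Sξ = αξ, where T := {Y ∈ V : g(Y,N) = 0}, η(Y) := g(Y,ξ), φ(X) := J X - g(J X,N)N, B(X) := A X - g(A X,N)N. Define R̄_N, R_ξ : T → T by R̄_N Y := Y + 3η(Y)ξ + g(A N,N)·B Y + g(A N,Y)·φ(Aξ) - g(Aξ,Y)·Aξ and R_ξ Y := Y - η(Y)ξ + β·B Y - g(Aξ,Y)·Aξ - g(φ(Aξ),Y)·φ(Aξ) + α·S Y - α²η(Y)ξ. Then R_ξ(ξ) = 0, R̄_N(ξ) = 4ξ - 2β·Aξ, and (R̄_N∘R_ξ - R_ξ∘R̄_N)(ξ) = 2αβ·(S(Aξ) - αβ·ξ). In particular, if R̄_N and R_ξ commute, then either αβ = 0 or S(Aξ) = αβ·ξ. -/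

import Mathlib

/-!
Everything is evaluated at the Reeb vector. With `ξ = -iN` one has `Aξ = iAN`, hence
`φ(Aξ) = g(AN,N)N - AN`, `B ξ = Aξ`, `B(Aξ) = ξ` and `g(AN,N) = -β`; these make `R_ξ(ξ)` vanish
and give `R̄_N(ξ) = 4ξ - 2β·Aξ` and `R_ξ(Aξ) = α(S(Aξ) - αβ·ξ)`. Both operators are linear, so the
commutator at `ξ` is `-R_ξ(4ξ - 2β·Aξ) = 2β·R_ξ(Aξ)`.
-/

noncomputable section

variable {V : Type*}

/-- The real inner product `g(x,y) = Re⟨x,y⟩` induced by the Hermitian inner product. -/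
def g [NormedAddCommGroup V] [InnerProductSpace ℂ V] (x y : V) : ℝ := (inner ℂ x y : ℂ).re

/-- The tangential part of `J X` on the hypersurface tangent space. -/
def phi [NormedAddCommGroup V] [InnerProductSpace ℂ V] (N X : V) : V :=
  Complex.I • X - g (Complex.I • X) N • N

/-- The tangential part of `A X` on the hypersurface tangent space. -/
def B [NormedAddCommGroup V] [InnerProductSpace ℂ V] (A : V →ₗ[ℝ] V) (N X : V) : V :=
  A X - g (A X) N • N

/-- The normal Jacobi operator of a Hopf hypersurface in the quadric:
`R̄_N Y = Y + 3η(Y)ξ + g(AN,N)·BY + g(AN,Y)·φ(Aξ) - g(Aξ,Y)·Aξ`. -/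
def RNop [NormedAddCommGroup V] [InnerProductSpace ℂ V]
    (A : V →ₗ[ℝ] V) (N ξ Y : V) : V :=
  Y + (3 * g Y ξ) • ξ + g (A N) N • B A N Y + g (A N) Y • phi N (A ξ)
    - g (A ξ) Y • A ξ

/-- The structure Jacobi operator of a Hopf hypersurface in the quadric:
`R_ξ Y = Y - η(Y)ξ + β·BY - g(Aξ,Y)·Aξ - g(φ(Aξ),Y)·φ(Aξ) + α·SY - α²η(Y)ξ`. -/
def Rxiop [NormedAddCommGroup V] [InnerProductSpace ℂ V]
    (A S : V →ₗ[ℝ] V) (α : ℝ) (N ξ Y : V) : V :=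
  Y - g Y ξ • ξ + g (A ξ) ξ • B A N Y - g (A ξ) Y • A ξ
    - g (phi N (A ξ)) Y • phi N (A ξ) + α • S Y - (α ^ 2 * g Y ξ) • ξ

open Complex

section RealInner

variable [NormedAddCommGroup V] [InnerProductSpace ℂ V]

theorem g_comm (x y : V) : g x y = g y x := by
  rw [g, g, ← inner_conj_symm, conj_re]

@[simp] theorem g_sub_left (x y z : V) : g (x - y) z = g x z - g y z := by
  simp [g]

@[simp] theorem g_sub_right (x y z : V) : g x (y - z) = g x y - g x z := by
  simp [g]

@[simp] theorem g_neg_left (x y : V) : g (-x) y = -g x y := by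
  simp [g, inner_neg_left]

@[simp] theorem g_neg_right (x y : V) : g x (-y) = -g x y := by
  simp [g, inner_neg_right]

@[simp] theorem g_smul_left (r : ℝ) (x y : V) : g (r • x) y = r * g x y := by
  simp [g, ← coe_smul, mul_comm]

@[simp] theorem g_smul_right (r : ℝ) (x y : V) : g x (r • y) = r * g x y := by
  simp [g, ← coe_smul, mul_comm]

theorem g_self (x : V) : g x x = ‖x‖ ^ 2 := by
  rw [g, ← inner_self_eq_norm_sq (𝕜 := ℂ)]
  rfl

@[simp] theorem g_I_smul_I_smul (x y : V) : g (I • x) (I • y) = g x y := by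
  simp [g, ← mul_assoc]

theorem g_I_smul_self (x : V) : g (I • x) x = 0 := by
  simp [g, Complex.mul_re, ← ofReal_pow]

end RealInner

structure IsRealStructure [NormedAddCommGroup V] [InnerProductSpace ℂ V] (A : V →ₗ[ℝ] V) :
    Prop where
  map_map : ∀ x, A (A x) = x
  map_I_smul : ∀ x, A (I • x) = -(I • A x)
  inner_map_map : ∀ x y, (inner ℂ (A x) (A y) : ℂ) = inner ℂ y x

namespace IsRealStructure

variable [NormedAddCommGroup V] [InnerProductSpace ℂ V] {A : V →ₗ[ℝ] V}

theorem g_map_map (hA : IsRealStructure A) (x y : V) : g (A x) (A y) = g y x := by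
  rw [g, hA.inner_map_map, g]

theorem g_map_left (hA : IsRealStructure A) (x y : V) : g (A x) y = g x (A y) := by
  rw [← hA.g_map_map, hA.map_map, g_comm]

end IsRealStructure

section Reeb

variable [NormedAddCommGroup V] [InnerProductSpace ℂ V] {A : V →ₗ[ℝ] V} {N ξ : V}

theorem g_reeb_normal (hξ : ξ = -(I • N)) : g ξ N = 0 := by
  rw [hξ, g_neg_left, g_I_smul_self, neg_zero]

theorem g_reeb_self (hN : ‖N‖ = 1) (hξ : ξ = -(I • N)) : g ξ ξ = 1 := by
  rw [hξ, g_neg_left, g_neg_right, neg_neg, g_I_smul_I_smul, g_self, hN, one_pow]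

theorem I_smul_map_reeb (hA : IsRealStructure A) (hξ : ξ = -(I • N)) : I • A ξ = -A N := by
  rw [hξ, map_neg, hA.map_I_smul, neg_neg, smul_smul, I_mul_I, neg_one_smul]

theorem g_map_normal_normal (hA : IsRealStructure A) (hξ : ξ = -(I • N)) :
    g (A N) N = -g (A ξ) ξ := by
  rw [← g_I_smul_I_smul (A ξ), I_smul_map_reeb hA hξ, hξ, smul_neg, smul_smul, I_mul_I,
    neg_one_smul, neg_neg, g_neg_left, neg_neg]

theorem phi_map_reeb (hA : IsRealStructure A) (hξ : ξ = -(I • N)) :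
    phi N (A ξ) = g (A N) N • N - A N := by
  rw [phi, I_smul_map_reeb hA hξ, g_neg_left, neg_smul, sub_neg_eq_add, neg_add_eq_sub]

theorem g_phi_map_reeb_reeb (hA : IsRealStructure A) (hξ : ξ = -(I • N))
    (hANξ : g (A N) ξ = 0) : g (phi N (A ξ)) ξ = 0 := by
  rw [phi_map_reeb hA hξ, g_sub_left, g_smul_left, g_comm N, g_reeb_normal hξ, hANξ]
  ring

theorem g_phi_map_reeb_map_reeb (hA : IsRealStructure A) (hξ : ξ = -(I • N))
    (hANξ : g (A N) ξ = 0) : g (phi N (A ξ)) (A ξ) = 0 := by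
  rw [phi_map_reeb hA hξ, g_sub_left, g_smul_left, ← hA.g_map_left, hA.g_map_map,
    g_reeb_normal hξ, hANξ]
  ring

theorem B_reeb (hA : IsRealStructure A) (hANξ : g (A N) ξ = 0) : B A N ξ = A ξ := by
  rw [B, hA.g_map_left, g_comm, hANξ, zero_smul, sub_zero]

theorem B_map_reeb (hA : IsRealStructure A) (hξ : ξ = -(I • N)) : B A N (A ξ) = ξ := by
  rw [B, hA.map_map, g_reeb_normal hξ, zero_smul, sub_zero]

end Reeb

section JacobiOperators

variable [NormedAddCommGroup V] [InnerProductSpace ℂ V] {A S : V →ₗ[ℝ] V} {α : ℝ} {N ξ : V}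

theorem RNop_zero : RNop A N ξ 0 = 0 := by
  simp [RNop, B, g]

theorem Rxiop_sub (x y : V) :
    Rxiop A S α N ξ (x - y) = Rxiop A S α N ξ x - Rxiop A S α N ξ y := by
  simp only [Rxiop, B, map_sub, g_sub_left, g_sub_right]
  module

theorem Rxiop_smul (r : ℝ) (x : V) : Rxiop A S α N ξ (r • x) = r • Rxiop A S α N ξ x := by
  simp only [Rxiop, B, map_smul, g_smul_left, g_smul_right]
  module

theorem Rxiop_reeb (hA : IsRealStructure A) (hN : ‖N‖ = 1) (hξ : ξ = -(I • N))
    (hANξ : g (A N) ξ = 0) (hSξ : S ξ = α • ξ) : Rxiop A S α N ξ ξ = 0 := by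
  rw [Rxiop, B_reeb hA hANξ, hSξ, g_reeb_self hN hξ, g_phi_map_reeb_reeb hA hξ hANξ]
  module

theorem RNop_reeb (hA : IsRealStructure A) (hN : ‖N‖ = 1) (hξ : ξ = -(I • N))
    (hANξ : g (A N) ξ = 0) : RNop A N ξ ξ = (4 : ℝ) • ξ - (2 * g (A ξ) ξ) • A ξ := by
  rw [RNop, B_reeb hA hANξ, g_reeb_self hN hξ, g_map_normal_normal hA hξ, hANξ]
  module

theorem Rxiop_map_reeb (hA : IsRealStructure A) (hN : ‖N‖ = 1) (hξ : ξ = -(I • N))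
    (hANξ : g (A N) ξ = 0) :
    Rxiop A S α N ξ (A ξ) = α • (S (A ξ) - (α * g (A ξ) ξ) • ξ) := by
  rw [Rxiop, B_map_reeb hA hξ, hA.g_map_map, g_reeb_self hN hξ,
    g_phi_map_reeb_map_reeb hA hξ hANξ]
  module

theorem RNop_Rxiop_sub_Rxiop_RNop_reeb (hA : IsRealStructure A) (hN : ‖N‖ = 1)
    (hξ : ξ = -(I • N)) (hANξ : g (A N) ξ = 0) (hSξ : S ξ = α • ξ) :
    RNop A N ξ (Rxiop A S α N ξ ξ) - Rxiop A S α N ξ (RNop A N ξ ξ)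
      = (2 * α * g (A ξ) ξ) • (S (A ξ) - (α * g (A ξ) ξ) • ξ) := by
  rw [Rxiop_reeb hA hN hξ hANξ hSξ, RNop_zero, RNop_reeb hA hN hξ hANξ, Rxiop_sub, Rxiop_smul,
    Rxiop_smul, Rxiop_reeb hA hN hξ hANξ hSξ, Rxiop_map_reeb hA hN hξ hANξ]
  module

end JacobiOperators

theorem stmt_10_general [NormedAddCommGroup V] [InnerProductSpace ℂ V]
    (A : V →ₗ[ℝ] V)
    (hA_invol : ∀ x, A (A x) = x)
    (hA_antiJ : ∀ x, A (Complex.I • x) = -(Complex.I • A x))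
    (hA_herm : ∀ x y, (inner ℂ (A x) (A y) : ℂ) = inner ℂ y x)
    (N : V) (hN : ‖N‖ = 1)
    (ξ : V) (hξ : ξ = -(Complex.I • N))
    (hANξ : g (A N) ξ = 0)
    (β : ℝ) (hβ : β = g (A ξ) ξ)
    (α : ℝ) (S : V →ₗ[ℝ] V)
    (hSξ : S ξ = α • ξ) :
    Rxiop A S α N ξ ξ = 0 ∧
    RNop A N ξ ξ = (4 : ℝ) • ξ - (2 * β) • A ξ ∧
    RNop A N ξ (Rxiop A S α N ξ ξ) - Rxiop A S α N ξ (RNop A N ξ ξ)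
      = (2 * α * β) • (S (A ξ) - (α * β) • ξ) ∧
    ((∀ Y : V, g Y N = 0 →
        RNop A N ξ (Rxiop A S α N ξ Y) = Rxiop A S α N ξ (RNop A N ξ Y)) →
      α * β = 0 ∨ S (A ξ) = (α * β) • ξ) := by
  have hA : IsRealStructure A := ⟨hA_invol, hA_antiJ, hA_herm⟩
  subst hβ
  have hcomm := RNop_Rxiop_sub_Rxiop_RNop_reeb hA hN hξ hANξ hSξ
  refine ⟨Rxiop_reeb hA hN hξ hANξ hSξ, RNop_reeb hA hN hξ hANξ, hcomm, fun hcommute => ?_⟩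
  rw [hcommute ξ (g_reeb_normal hξ), sub_self, eq_comm, smul_eq_zero, sub_eq_zero] at hcomm
  exact hcomm.imp (fun h => by linarith) id

/-- With `g(AN,ξ) = 0`, `β = g(Aξ,ξ)` and a Hopf shape operator `S` (g-symmetric,
`Sξ = αξ`), one has `R_ξ(ξ) = 0`, `R̄_N(ξ) = 4ξ - 2β·Aξ`, and
`(R̄_N∘R_ξ - R_ξ∘R̄_N)(ξ) = 2αβ·(S(Aξ) - αβ·ξ)`; in particular, if `R̄_N` and `R_ξ`
commute on `T`, then `αβ = 0` or `S(Aξ) = αβ·ξ`. -/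
theorem stmt_10 [NormedAddCommGroup V] [InnerProductSpace ℂ V]
    (A : V →ₗ[ℝ] V)
    (hA_invol : ∀ x, A (A x) = x)
    (hA_antiJ : ∀ x, A (Complex.I • x) = -(Complex.I • A x))
    (hA_herm : ∀ x y, (inner ℂ (A x) (A y) : ℂ) = inner ℂ y x)
    (N : V) (hN : ‖N‖ = 1)
    (ξ : V) (hξ : ξ = -(Complex.I • N))
    (hANξ : g (A N) ξ = 0)
    (β : ℝ) (hβ : β = g (A ξ) ξ)
    (α : ℝ) (S : V →ₗ[ℝ] V)
    (hS_tan : ∀ Y : V, g Y N = 0 → g (S Y) N = 0)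
    (hS_sym : ∀ X Y : V, g X N = 0 → g Y N = 0 → g (S X) Y = g X (S Y))
    (hSξ : S ξ = α • ξ) :
    Rxiop A S α N ξ ξ = 0 ∧
    RNop A N ξ ξ = (4 : ℝ) • ξ - (2 * β) • A ξ ∧
    RNop A N ξ (Rxiop A S α N ξ ξ) - Rxiop A S α N ξ (RNop A N ξ ξ)
      = (2 * α * β) • (S (A ξ) - (α * β) • ξ) ∧
    ((∀ Y : V, g Y N = 0 →
        RNop A N ξ (Rxiop A S α N ξ Y) = Rxiop A S α N ξ (RNop A N ξ Y)) →
      α * β = 0 ∨ S (A ξ) = (α * β) • ξ) :=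
  stmt_10_general A hA_invol hA_antiJ hA_herm N hN ξ hξ hANξ β hβ α S hSξ
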